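/- arXiv:2109.04818 — 2 statements merged into one kernel-verified Lean document; each statement's English description precedes it below -/
import Mathlib

section
/- Let 𝒫 and ℛ be finite measurable partitions of Ξ and let 𝒫 ∧ ℛ := {P ∩ R : P ∈ 𝒫, R ∈ ℛ} be their common refinement. Then for every x ∈ ℝⁿ one has V_{𝒫∧ℛ}(x) ≥ max(V_𝒫(x), V_ℛ(x)) (as elements of ℝ ∪ {+∞}). -/
open MeasureTheory
open scoped BigOperators Classical

noncomputable section

/-- The space of alea `Ξ = ℝ^{l×n} × ℝ^l`: pairs `ξ = (T, h)`. -/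
abbrev Xi (l n : ℕ) := (Fin l → Fin n → ℝ) × (Fin l → ℝ)

/-- The dual admissible polyhedron `D = {λ : Wᵀλ ≤ q}`. -/
def polyD {l m : ℕ} (W : Fin l → Fin m → ℝ) (q : Fin m → ℝ) : Set (Fin l → ℝ) :=
  {lam | ∀ j, (∑ i, W i j * lam i) ≤ q j}

/-- Recourse cost `Q(x, ξ) = sup_{λ ∈ D} ⟨h - Tx, λ⟩ ∈ ℝ ∪ {+∞}` (as an `EReal`). -/
def Qfun {l n m : ℕ} (W : Fin l → Fin m → ℝ) (q : Fin m → ℝ)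
    (x : Fin n → ℝ) (ξ : Xi l n) : EReal :=
  ⨆ lam ∈ polyD W q, ((∑ i, (ξ.2 i - ∑ j, ξ.1 i j * x j) * lam i : ℝ) : EReal)

/-- A finite measurable partition of `α`, given as a `Finset` of sets. -/
def IsFinPartition {α : Type*} [MeasurableSpace α] (Ps : Finset (Set α)) : Prop :=
  (∀ P ∈ Ps, MeasurableSet P) ∧ ((Ps : Set (Set α)).PairwiseDisjoint id) ∧
    ⋃₀ (Ps : Set (Set α)) = Set.univ

/-- Conditional expectation `E[ξ | ξ ∈ P] = E[ξ 1_{ξ ∈ P}] / ℙ[ξ ∈ P]`. -/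
def condMean {Ω : Type*} [MeasurableSpace Ω] {l n : ℕ} (ℙ : Measure Ω)
    (ξ : Ω → Xi l n) (P : Set (Xi l n)) : Xi l n :=
  (ℙ (ξ ⁻¹' P)).toReal⁻¹ • ∫ ω in ξ ⁻¹' P, ξ ω ∂ℙ

/-- Expected cost-to-go of a partition: `V_Ps(x) = Σ_{P ∈ Ps, ℙ[ξ∈P] > 0} ℙ[ξ∈P] Q(x, E[ξ|P])`. -/
def Vpart {Ω : Type*} [MeasurableSpace Ω] {l n m : ℕ} (W : Fin l → Fin m → ℝ)
    (q : Fin m → ℝ) (ℙ : Measure Ω) (ξ : Ω → Xi l n) (Ps : Finset (Set (Xi l n)))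
    (x : Fin n → ℝ) : EReal :=
  ∑ P ∈ Ps, if 0 < ℙ (ξ ⁻¹' P) then
    ((ℙ (ξ ⁻¹' P)).toReal : EReal) * Qfun W q x (condMean ℙ ξ P) else 0

/-- True expected cost-to-go `V(x) = E[Q(x, ξ)] ∈ ℝ ∪ {+∞}`: the real integral when
`Q(x, ξ)` is integrable (a.e. finite with integrable real part), `+∞` otherwise. -/
def Vtrue {Ω : Type*} [MeasurableSpace Ω] {l n m : ℕ} (W : Fin l → Fin m → ℝ)
    (q : Fin m → ℝ) (ℙ : Measure Ω) (ξ : Ω → Xi l n) (x : Fin n → ℝ) : EReal :=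
  if (∀ᵐ ω ∂ℙ, Qfun W q x (ξ ω) ≠ ⊤) ∧
      Integrable (fun ω => (Qfun W q x (ξ ω)).toReal) ℙ then
    (((∫ ω, (Qfun W q x (ξ ω)).toReal ∂ℙ) : ℝ) : EReal)
  else ⊤

/-- `Ps` ℙ-refines `ℛ`: every `P ∈ Ps` is ℙ-essentially contained in some `R ∈ ℛ`. -/
def PRefines {Ω : Type*} [MeasurableSpace Ω] {l n : ℕ} (ℙ : Measure Ω) (ξ : Ω → Xi l n)
    (Ps ℛ : Finset (Set (Xi l n))) : Prop :=
  ∀ P ∈ Ps, ∃ R ∈ ℛ, ℙ (ξ ⁻¹' (P ∩ R)) = ℙ (ξ ⁻¹' P)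

/-- Conditional expectation `E[Q(x,ξ) | ξ ∈ P] ∈ ℝ ∪ {+∞}`: equal to
`E[Q(x,ξ) 1_{ξ∈P}] / ℙ[ξ∈P]` when `Q(x,ξ) 1_{ξ∈P}` is integrable, `+∞` otherwise. -/
def condQ {Ω : Type*} [MeasurableSpace Ω] {l n m : ℕ} (W : Fin l → Fin m → ℝ)
    (q : Fin m → ℝ) (ℙ : Measure Ω) (ξ : Ω → Xi l n) (x : Fin n → ℝ)
    (P : Set (Xi l n)) : EReal :=
  if (∀ᵐ ω ∂ℙ, ξ ω ∈ P → Qfun W q x (ξ ω) ≠ ⊤) ∧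
      IntegrableOn (fun ω => (Qfun W q x (ξ ω)).toReal) (ξ ⁻¹' P) ℙ then
    (((ℙ (ξ ⁻¹' P)).toReal⁻¹ * ∫ ω in ξ ⁻¹' P, (Qfun W q x (ξ ω)).toReal ∂ℙ : ℝ) : EReal)
  else ⊤

/-- Subdifferential of an `EReal`-valued function at `x`. -/
def SubDiff {n : ℕ} (f : (Fin n → ℝ) → EReal) (x : Fin n → ℝ) : Set (Fin n → ℝ) :=
  {g | ∀ y, f x + ((∑ i, g i * (y i - x i) : ℝ) : EReal) ≤ f y}

/-!
For fixed `x`, `Q(x, ξ) = σ_D(h - T x)` is the support function of `D` composed with a linear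
map of `ξ`, hence sublinear in `ξ`. By positive homogeneity, the summand
`ℙ[ξ ∈ P] · Q(x, E[ξ | P])` equals `σ_D` evaluated at `∫_{ξ ∈ P} (h - T x)`, and this integral
is additive over the cells `P ∩ R`, `R ∈ ℛ`. Subadditivity of `σ_D` then gives `V_𝒫 ≤ V_{𝒫 ∧ ℛ}`,
and symmetrically `V_ℛ ≤ V_{𝒫 ∧ ℛ}`.
-/

section SupportFunction

variable {ι : Type*} [Fintype ι] (D : Set (ι → ℝ))

def supportFun (y : ι → ℝ) : EReal :=
  ⨆ lam ∈ D, ((y ⬝ᵥ lam : ℝ) : EReal)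

lemma supportFun_zero_le : supportFun D 0 ≤ 0 :=
  iSup₂_le fun lam _ => by simp

lemma supportFun_add_le (y z : ι → ℝ) :
    supportFun D (y + z) ≤ supportFun D y + supportFun D z :=
  iSup₂_le fun lam hlam => by
    rw [add_dotProduct, EReal.coe_add]
    exact add_le_add (le_iSup₂ (f := fun lam _ => ((y ⬝ᵥ lam : ℝ) : EReal)) lam hlam)
      (le_iSup₂ (f := fun lam _ => ((z ⬝ᵥ lam : ℝ) : EReal)) lam hlam)

lemma supportFun_sum_le {κ : Type*} (s : Finset κ) (y : κ → ι → ℝ) :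
    supportFun D (∑ k ∈ s, y k) ≤ ∑ k ∈ s, supportFun D (y k) :=
  Finset.le_sum_of_subadditive _ (supportFun_zero_le D) (supportFun_add_le D) s y

lemma supportFun_smul_le {c : ℝ} (hc : 0 ≤ c) (y : ι → ℝ) :
    supportFun D (c • y) ≤ c * supportFun D y :=
  iSup₂_le fun lam hlam => by
    rw [smul_dotProduct, smul_eq_mul, EReal.coe_mul]
    exact mul_le_mul_of_nonneg_left
      (le_iSup₂ (f := fun lam _ => ((y ⬝ᵥ lam : ℝ) : EReal)) lam hlam) (by exact_mod_cast hc)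

lemma supportFun_smul {c : ℝ} (hc : 0 < c) (y : ι → ℝ) :
    supportFun D (c • y) = c * supportFun D y := by
  refine le_antisymm (supportFun_smul_le D hc.le y) ?_
  calc (c : EReal) * supportFun D y = c * supportFun D (c⁻¹ • c • y) := by
        rw [inv_smul_smul₀ hc.ne']
    _ ≤ c * (c⁻¹ * supportFun D (c • y)) :=
        mul_le_mul_of_nonneg_left (supportFun_smul_le D (inv_nonneg.2 hc.le) _)
          (by exact_mod_cast hc.le)
    _ = supportFun D (c • y) := by
        rw [← mul_assoc, ← EReal.coe_mul, mul_inv_cancel₀ hc.ne', EReal.coe_one, one_mul]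

variable {D} in
lemma supportFun_zero (hD : D.Nonempty) : supportFun D 0 = 0 := by
  simp only [supportFun, zero_dotProduct, EReal.coe_zero]
  exact biSup_const hD

end SupportFunction

def recourseRhs {l n : ℕ} (x : Fin n → ℝ) : Xi l n →ₗ[ℝ] (Fin l → ℝ) where
  toFun ξ := ξ.2 - Matrix.mulVec ξ.1 x
  map_add' ξ ζ := by
    rw [sub_add_sub_comm]
    exact congrArg _ (Matrix.add_mulVec _ _ _)
  map_smul' c ξ := by
    rw [smul_sub]
    exact congrArg _ (Matrix.smul_mulVec _ _ _)

lemma Qfun_eq_supportFun {l n m : ℕ} (W : Fin l → Fin m → ℝ) (q : Fin m → ℝ)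
    (x : Fin n → ℝ) (ξ : Xi l n) : Qfun W q x ξ = supportFun (polyD W q) (recourseRhs x ξ) := by
  unfold Qfun supportFun
  rfl

lemma pairwiseDisjoint_inter_product {α : Type*} {s t : Finset (Set α)}
    (hs : (s : Set (Set α)).PairwiseDisjoint id) (ht : (t : Set (Set α)).PairwiseDisjoint id) :
    ((s ×ˢ t : Finset (Set α × Set α)) : Set (Set α × Set α)).PairwiseDisjoint fun p => p.1 ∩ p.2 := by
  rw [Finset.coe_product]
  rintro ⟨P, R⟩ ⟨hP, hR⟩ ⟨P', R'⟩ ⟨hP', hR'⟩ hne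
  exact Set.disjoint_left.2 fun a ha ha' =>
    hne <| Prod.ext (hs.elim_set hP hP' a ha.1 ha'.1) (ht.elim_set hR hR' a ha.2 ha'.2)

lemma image_inter_product_comm {α : Type*} (s t : Finset (Set α)) :
    (s ×ˢ t).image (fun p => p.1 ∩ p.2) = (t ×ˢ s).image (fun p => p.1 ∩ p.2) := by
  exact Finset.image₂_comm Set.inter_comm

lemma IsFinPartition.setIntegral_eq_sum_inter_preimage {Ω β E : Type*} [MeasurableSpace Ω]
    [MeasurableSpace β] [NormedAddCommGroup E] [NormedSpace ℝ E] {μ : Measure Ω}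
    {Rs : Finset (Set β)} (hRs : IsFinPartition Rs) {ξ : Ω → β} (hξ : Measurable ξ)
    {f : Ω → E} {s : Set Ω} (hs : MeasurableSet s) (hf : IntegrableOn f s μ) :
    ∫ ω in s, f ω ∂μ = ∑ R ∈ Rs, ∫ ω in s ∩ ξ ⁻¹' R, f ω ∂μ := by
  have hcover : s = ⋃ R ∈ Rs, s ∩ ξ ⁻¹' R := by
    rw [← Set.inter_iUnion₂, ← Set.preimage_iUnion₂, ← Finset.set_biUnion_coe,
      ← Set.sUnion_eq_biUnion, hRs.2.2,
      Set.preimage_univ, Set.inter_univ]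
  conv_lhs => rw [hcover]
  refine integral_biUnion_finset Rs (fun R hR => hs.inter (hξ (hRs.1 R hR))) ?_
    fun R _ => hf.mono_set Set.inter_subset_left
  exact fun R hR R' hR' hne => ((hRs.2.1 hR hR' hne).preimage ξ).mono
    Set.inter_subset_right Set.inter_subset_right

section Refinement

variable {Ω : Type*} [MeasurableSpace Ω] {l n m : ℕ} (W : Fin l → Fin m → ℝ) (q : Fin m → ℝ)
  (ℙ : Measure Ω) (ξ : Ω → Xi l n) (x : Fin n → ℝ)

/-- `ℙ[ξ ∈ S] · Q(x, E[ξ | S])` on non-null cells, by positive homogeneity of `Q(x, ·)`. -/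
def cellCost (S : Set (Xi l n)) : EReal :=
  supportFun (polyD W q) (recourseRhs x (∫ ω in ξ ⁻¹' S, ξ ω ∂ℙ))

variable {W q ℙ ξ}

lemma cellCost_empty (hD : (polyD W q).Nonempty) : cellCost W q ℙ ξ x ∅ = 0 := by
  simp only [cellCost, Set.preimage_empty, Measure.restrict_empty, integral_zero_measure,
    map_zero, supportFun_zero hD]

lemma cellCost_le_sum_inter (hξ : Measurable ξ) (hξint : Integrable ξ ℙ) {P : Set (Xi l n)}
    (hP : MeasurableSet P) {Rs : Finset (Set (Xi l n))} (hRs : IsFinPartition Rs) :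
    cellCost W q ℙ ξ x P ≤ ∑ R ∈ Rs, cellCost W q ℙ ξ x (P ∩ R) := by
  rw [cellCost, hRs.setIntegral_eq_sum_inter_preimage hξ (hξ hP) hξint.integrableOn, map_sum]
  exact supportFun_sum_le _ _ _

lemma Vpart_eq_sum_cellCost [IsFiniteMeasure ℙ] (hD : (polyD W q).Nonempty)
    (Ps : Finset (Set (Xi l n))) : Vpart W q ℙ ξ Ps x = ∑ P ∈ Ps, cellCost W q ℙ ξ x P := by
  refine Finset.sum_congr rfl fun P _ => ?_
  split_ifs with hP
  · have hp : 0 < (ℙ (ξ ⁻¹' P)).toReal := ENNReal.toReal_pos hP.ne' (measure_ne_top ℙ _)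
    rw [Qfun_eq_supportFun, condMean, map_smul, supportFun_smul _ (inv_pos.2 hp), ← mul_assoc,
      ← EReal.coe_mul, mul_inv_cancel₀ hp.ne', EReal.coe_one, one_mul, cellCost]
  · rw [cellCost, setIntegral_measure_zero _ (nonpos_iff_eq_zero.1 (not_lt.1 hP)), map_zero,
      supportFun_zero hD]

lemma Vpart_le_Vpart_image_inter [IsFiniteMeasure ℙ] (hD : (polyD W q).Nonempty)
    (hξ : Measurable ξ) (hξint : Integrable ξ ℙ) {Ps Rs : Finset (Set (Xi l n))}
    (hPs : IsFinPartition Ps) (hRs : IsFinPartition Rs) :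
    Vpart W q ℙ ξ Ps x ≤ Vpart W q ℙ ξ ((Ps ×ˢ Rs).image (fun PR => PR.1 ∩ PR.2)) x := by
  rw [Vpart_eq_sum_cellCost x hD, Vpart_eq_sum_cellCost x hD,
    Finset.sum_image_of_disjoint (cellCost_empty x hD)
      (pairwiseDisjoint_inter_product hPs.2.1 hRs.2.1), Finset.sum_product]
  exact Finset.sum_le_sum fun P hP => cellCost_le_sum_inter x hξ hξint (hPs.1 P hP) hRs

end Refinement

theorem common_refinement_value_ge_max_general
    {Ω : Type*} [MeasurableSpace Ω] {l n m : ℕ}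
    (W : Fin l → Fin m → ℝ) (q : Fin m → ℝ) (hD : (polyD W q).Nonempty)
    (ℙ : Measure Ω) [IsProbabilityMeasure ℙ]
    (ξ : Ω → Xi l n) (hξmeas : Measurable ξ) (hξint : Integrable ξ ℙ)
    (Ps Rs : Finset (Set (Xi l n)))
    (hPs : IsFinPartition Ps) (hRs : IsFinPartition Rs) :
    ∀ x : Fin n → ℝ,
      max (Vpart W q ℙ ξ Ps x) (Vpart W q ℙ ξ Rs x) ≤
        Vpart W q ℙ ξ ((Ps ×ˢ Rs).image (fun PR => PR.1 ∩ PR.2)) x := fun x =>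
  max_le (Vpart_le_Vpart_image_inter x hD hξmeas hξint hPs hRs) <| by
    rw [image_inter_product_comm]
    exact Vpart_le_Vpart_image_inter x hD hξmeas hξint hRs hPs

/-- Lemma 2, Eq. (11): the common refinement `Ps ∧ Rs = {P ∩ R}`
satisfies `V_{Ps ∧ Rs} ≥ max(V_Ps, V_Rs)`. -/
theorem common_refinement_value_ge_max
    {Ω : Type*} [MeasurableSpace Ω] {l n m : ℕ}
    (hl : 0 < l) (hn : 0 < n) (hm : 0 < m)
    (W : Fin l → Fin m → ℝ) (q : Fin m → ℝ) (hD : (polyD W q).Nonempty)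
    (ℙ : Measure Ω) [IsProbabilityMeasure ℙ]
    (ξ : Ω → Xi l n) (hξmeas : Measurable ξ) (hξint : Integrable ξ ℙ)
    (Ps Rs : Finset (Set (Xi l n)))
    (hPs : IsFinPartition Ps) (hRs : IsFinPartition Rs) :
    ∀ x : Fin n → ℝ,
      max (Vpart W q ℙ ξ Ps x) (Vpart W q ℙ ξ Rs x) ≤
        Vpart W q ℙ ξ ((Ps ×ˢ Rs).image (fun PR => PR.1 ∩ PR.2)) x :=
  common_refinement_value_ge_max_general W q hD ℙ ξ hξmeas hξint Ps Rs hPs hRs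

end
end

section
/- Let x ∈ ℝⁿ and suppose ω ↦ Q(x,ξ(ω)) is integrable (so in particular Q(x,ξ) < +∞ almost surely). Let 𝒫 be a finite measurable partition of Ξ with V_𝒫(x) = V(x). Then for every P ∈ 𝒫 with ℙ[ξ ∈ P] > 0 there exists λ_P ∈ D such that ⟨h − Tx, λ_P⟩ = Q(x, ξ(ω)) for ℙ-almost every ω with ξ(ω) = (T,h) ∈ P. -/
open MeasureTheory
open scoped BigOperators Classical

noncomputable section

/-!
For `λ ∈ D` the map `ξ ↦ ⟨h - T x, λ⟩` is linear and bounded by `Q(x, ξ)`, so integrating it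
over a cell gives the cellwise Jensen inequality `ℙ[ξ ∈ P] Q(x, E[ξ|P]) ≤ E[Q(x, ξ) 1_{ξ ∈ P}]`.
Summed over the cells these inequalities read `V_𝒫(x) ≤ V(x)`, so adaptedness forces equality on
every cell. On a cell of positive probability `Q(x, E[ξ|P])` is then a finite linear program over
the polyhedron `D`, hence attained at some `λ_P ∈ D`; the integrals of `⟨h - T x, λ_P⟩ ≤ Q(x, ξ)`
over the cell agree, so the two functions agree almost everywhere on it.

A linear functional bounded above on a nonempty polyhedron attains its supremum: by induction on
the number of inequality constraints, if dropping the `j`-th one produces a point beating the whole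
polyhedron, every point can be moved towards it onto the face `a j = b j` without decreasing the
objective.
-/

section Polyhedron

variable {𝕜 E ι : Type*} [Field 𝕜] [LinearOrder 𝕜] [AddCommGroup E] [Module 𝕜 E]

def polyhedron (a : ι → E →ₗ[𝕜] 𝕜) (b : ι → 𝕜) (I J : Finset ι) : Set E :=
  {x | (∀ j ∈ I, a j x ≤ b j) ∧ ∀ j ∈ J, a j x = b j}

variable {a : ι → E →ₗ[𝕜] 𝕜} {b : ι → 𝕜}

lemma mem_polyhedron_insert_iff {I J : Finset ι} {j : ι} {y : E} :
    y ∈ polyhedron a b (insert j I) J ↔ y ∈ polyhedron a b I J ∧ a j y ≤ b j := by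
  simp only [polyhedron, Set.mem_ofPred_eq, Finset.mem_insert, forall_eq_or_imp]
  tauto

lemma polyhedron_insert_subset {I J : Finset ι} {j : ι} :
    polyhedron a b I (insert j J) ⊆ polyhedron a b (insert j I) J :=
  fun _ hz => mem_polyhedron_insert_iff.mpr
    ⟨⟨hz.1, fun k hk => hz.2 k (Finset.mem_insert_of_mem hk)⟩,
      (hz.2 j (Finset.mem_insert_self j J)).le⟩

variable [IsStrictOrderedRing 𝕜]

lemma convex_polyhedron (I J : Finset ι) : Convex 𝕜 (polyhedron a b I J) := by
  have : polyhedron a b I J =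
      (⋂ j ∈ I, {x | a j x ≤ b j}) ∩ ⋂ j ∈ J, {x | a j x = b j} := by
    ext x; simp [polyhedron]
  rw [this]
  exact (convex_iInter₂ fun j _ => convex_halfSpace_le (a j).isLinear _).inter
    (convex_iInter₂ fun j _ => convex_hyperplane (a j).isLinear _)

lemma isMaxOn_polyhedron_empty {J : Finset ι} {c : E →ₗ[𝕜] 𝕜}
    (hbdd : BddAbove (c '' polyhedron a b ∅ J)) {x : E} (hx : x ∈ polyhedron a b ∅ J) :
    IsMaxOn c (polyhedron a b ∅ J) x := by
  refine isMaxOn_iff.mpr fun y hy => ?_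
  by_contra! hlt
  obtain ⟨B, hB⟩ := hbdd
  -- The line through `x` and `y` stays in the affine subspace, and `c` is unbounded on it.
  set t := (B - c x + 1) / (c y - c x)
  have hline : x + t • (y - x) ∈ polyhedron a b ∅ J := by
    refine ⟨by simp, fun j hj => ?_⟩
    simp [hx.2 j hj, hy.2 j hj]
  have := hB ⟨_, hline, rfl⟩
  have hpos : 0 < c y - c x := sub_pos.mpr hlt
  simp only [map_add, map_smul, map_sub, smul_eq_mul, t, div_mul_cancel₀ _ hpos.ne'] at this
  linarith

lemma exists_mem_polyhedron_insert_le {I J : Finset ι} {j : ι} {c : E →ₗ[𝕜] 𝕜} {x y : E}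
    (hx : x ∈ polyhedron a b I J) (hxj : a j x ≤ b j)
    (hy : y ∈ polyhedron a b I J) (hyj : b j < a j y) (hxy : c x ≤ c y) :
    ∃ z ∈ polyhedron a b I (insert j J), c x ≤ c z := by
  have hpos : 0 < a j y - a j x := by linarith
  set t := (b j - a j x) / (a j y - a j x)
  have ht : t ∈ Set.Icc (0 : 𝕜) 1 :=
    ⟨div_nonneg (by linarith) hpos.le, (div_le_one hpos).mpr (by linarith)⟩
  have hz := (convex_polyhedron I J).add_smul_sub_mem hx hy ht
  refine ⟨x + t • (y - x), ⟨hz.1, ?_⟩, ?_⟩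
  · simp only [Finset.mem_insert, forall_eq_or_imp]
    refine ⟨?_, hz.2⟩
    simp only [map_add, map_smul, map_sub, smul_eq_mul, t, div_mul_cancel₀ _ hpos.ne']
    ring
  · simp only [map_add, map_smul, map_sub, smul_eq_mul]
    exact le_add_of_nonneg_right (mul_nonneg ht.1 (sub_nonneg.mpr hxy))

lemma exists_isMaxOn_polyhedron_insert_of_face {I J : Finset ι} {j : ι} {c : E →ₗ[𝕜] 𝕜}
    (hface : (polyhedron a b I (insert j J)).Nonempty →
      BddAbove (c '' polyhedron a b I (insert j J)) →
      ∃ x ∈ polyhedron a b I (insert j J), IsMaxOn c (polyhedron a b I (insert j J)) x)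
    (hne : (polyhedron a b (insert j I) J).Nonempty)
    (hbdd : BddAbove (c '' polyhedron a b (insert j I) J))
    {y : E} (hy : y ∈ polyhedron a b I J) (hyj : b j < a j y)
    (hymax : ∀ z ∈ polyhedron a b (insert j I) J, c z ≤ c y) :
    ∃ x ∈ polyhedron a b (insert j I) J, IsMaxOn c (polyhedron a b (insert j I) J) x := by
  have lift : ∀ z ∈ polyhedron a b (insert j I) J,
      ∃ w ∈ polyhedron a b I (insert j J), c z ≤ c w := fun z hz =>
    exists_mem_polyhedron_insert_le (mem_polyhedron_insert_iff.mp hz).1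
      (mem_polyhedron_insert_iff.mp hz).2 hy hyj (hymax z hz)
  obtain ⟨x₀, hx₀⟩ := hne
  obtain ⟨w₀, hw₀, -⟩ := lift x₀ hx₀
  obtain ⟨x, hx, hxmax⟩ := hface ⟨w₀, hw₀⟩ (hbdd.mono (Set.image_mono polyhedron_insert_subset))
  refine ⟨x, polyhedron_insert_subset hx, fun z hz => ?_⟩
  obtain ⟨w, hw, hzw⟩ := lift z hz
  exact hzw.trans (hxmax hw)

theorem exists_isMaxOn_polyhedron (c : E →ₗ[𝕜] 𝕜) (I J : Finset ι)
    (hne : (polyhedron a b I J).Nonempty) (hbdd : BddAbove (c '' polyhedron a b I J)) :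
    ∃ x ∈ polyhedron a b I J, IsMaxOn c (polyhedron a b I J) x := by
  induction I using Finset.induction_on generalizing J with
  | empty =>
    obtain ⟨x, hx⟩ := hne
    exact ⟨x, hx, isMaxOn_polyhedron_empty hbdd hx⟩
  | @insert j I _ ih =>
    have of_face := fun y =>
      exists_isMaxOn_polyhedron_insert_of_face (y := y) (ih (insert j J)) hne hbdd
    obtain ⟨x₀, hx₀⟩ := hne
    by_cases hbdd' : BddAbove (c '' polyhedron a b I J)
    · obtain ⟨y, hy, hymax⟩ := ih J ⟨x₀, (mem_polyhedron_insert_iff.mp hx₀).1⟩ hbdd'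
      by_cases hyj : a j y ≤ b j
      · exact ⟨y, mem_polyhedron_insert_iff.mpr ⟨hy, hyj⟩,
          fun z hz => hymax (mem_polyhedron_insert_iff.mp hz).1⟩
      · exact of_face y hy (not_le.mp hyj) fun z hz => hymax (mem_polyhedron_insert_iff.mp hz).1
    · obtain ⟨B, hB⟩ := hbdd
      obtain ⟨_, ⟨y, hy, rfl⟩, hBy⟩ := not_bddAbove_iff.mp hbdd' B
      have hyj : b j < a j y := by
        by_contra! hyj
        exact (hB ⟨y, mem_polyhedron_insert_iff.mpr ⟨hy, hyj⟩, rfl⟩).not_gt hBy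
      exact of_face y hy hyj fun z hz => (hB ⟨z, hz, rfl⟩).trans hBy.le

end Polyhedron

open Matrix

lemma EReal.coe_finset_sum {ι : Type*} (s : Finset ι) (f : ι → ℝ) :
    ((∑ i ∈ s, f i : ℝ) : EReal) = ∑ i ∈ s, (f i : EReal) :=
  map_sum (⟨⟨Real.toEReal, EReal.coe_zero⟩, EReal.coe_add⟩ : ℝ →+ EReal) f s

lemma IsFinPartition.sum_setIntegral_preimage {α Ω G : Type*} [MeasurableSpace α]
    [MeasurableSpace Ω] [NormedAddCommGroup G] [NormedSpace ℝ G] {μ : Measure Ω}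
    {Ps : Finset (Set α)} (hPs : IsFinPartition Ps) {ξ : Ω → α} (hξ : Measurable ξ)
    {f : Ω → G} (hf : Integrable f μ) :
    ∑ P ∈ Ps, ∫ ω in ξ ⁻¹' P, f ω ∂μ = ∫ ω, f ω ∂μ := by
  have hunion : ⋃ P ∈ Ps, ξ ⁻¹' P = Set.univ := by
    simpa [Set.sUnion_eq_biUnion] using congrArg (ξ ⁻¹' ·) hPs.2.2
  rw [← setIntegral_univ, ← hunion, integral_biUnion_finset Ps
    (fun P hP => hξ (hPs.1 P hP))
    (fun P hP P' hP' hne => (hPs.2.1 hP hP' hne).preimage ξ) fun P _ => hf.integrableOn]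

section Recourse

variable {l n m : ℕ} {W : Fin l → Fin m → ℝ} {q : Fin m → ℝ}

def costResidual (x : Fin n → ℝ) : Xi l n →ₗ[ℝ] (Fin l → ℝ) where
  toFun ξ := ξ.2 - ξ.1 *ᵥ x
  map_add' ξ ζ := by
    ext i
    simp [mulVec, dotProduct, add_mul, Finset.sum_add_distrib]
    ring
  map_smul' c ξ := by
    ext i
    simp [mulVec, dotProduct, Finset.mul_sum, mul_assoc, mul_sub]

lemma Qfun_eq_iSup (x : Fin n → ℝ) (ξ : Xi l n) :
    Qfun W q x ξ = ⨆ lam ∈ polyD W q, ((costResidual x ξ ⬝ᵥ lam : ℝ) : EReal) := rfl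

lemma polyD_eq_polyhedron :
    polyD W q = polyhedron (fun j => dotProductBilin ℝ ℝ fun i => W i j) q Finset.univ ∅ := by
  ext lam
  simp [polyD, polyhedron, dotProduct]

lemma coe_dotProduct_le_Qfun {x : Fin n → ℝ} {ξ : Xi l n} {lam : Fin l → ℝ}
    (hlam : lam ∈ polyD W q) : ((costResidual x ξ ⬝ᵥ lam : ℝ) : EReal) ≤ Qfun W q x ξ :=
  le_iSup₂ (f := fun lam _ => ((costResidual x ξ ⬝ᵥ lam : ℝ) : EReal)) lam hlam

lemma dotProduct_le_toReal_Qfun {x : Fin n → ℝ} {ξ : Xi l n} {lam : Fin l → ℝ}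
    (hlam : lam ∈ polyD W q) (hQ : Qfun W q x ξ ≠ ⊤) :
    costResidual x ξ ⬝ᵥ lam ≤ (Qfun W q x ξ).toReal :=
  EReal.coe_le_coe_iff.mp ((coe_dotProduct_le_Qfun hlam).trans (EReal.le_coe_toReal hQ))

lemma Qfun_ne_bot (hD : (polyD W q).Nonempty) (x : Fin n → ℝ) (ξ : Xi l n) :
    Qfun W q x ξ ≠ ⊥ := by
  obtain ⟨lam, hlam⟩ := hD
  exact ne_bot_of_le_ne_bot (EReal.coe_ne_bot _) (coe_dotProduct_le_Qfun hlam)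

lemma Qfun_le_coe_iff {x : Fin n → ℝ} {ξ : Xi l n} {B : ℝ} :
    Qfun W q x ξ ≤ B ↔ ∀ lam ∈ polyD W q, costResidual x ξ ⬝ᵥ lam ≤ B := by
  simp only [Qfun_eq_iSup, iSup₂_le_iff, EReal.coe_le_coe_iff]

theorem exists_Qfun_eq_coe_dotProduct (hD : (polyD W q).Nonempty) {x : Fin n → ℝ}
    {ξ : Xi l n} (hQ : Qfun W q x ξ ≠ ⊤) :
    ∃ lam ∈ polyD W q, Qfun W q x ξ = ((costResidual x ξ ⬝ᵥ lam : ℝ) : EReal) := by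
  have hbdd : BddAbove (dotProductBilin ℝ ℝ (costResidual x ξ) '' polyD W q) := by
    refine ⟨(Qfun W q x ξ).toReal, ?_⟩
    rintro _ ⟨lam, hlam, rfl⟩
    exact dotProduct_le_toReal_Qfun hlam hQ
  rw [polyD_eq_polyhedron] at hD hbdd
  obtain ⟨lam, hlam, hmax⟩ := exists_isMaxOn_polyhedron _ _ _ hD hbdd
  rw [← polyD_eq_polyhedron] at hlam hmax
  exact ⟨lam, hlam, le_antisymm (Qfun_le_coe_iff.mpr fun μ hμ => isMaxOn_iff.mp hmax μ hμ)
    (coe_dotProduct_le_Qfun hlam)⟩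

end Recourse

section Cells

variable {Ω : Type*} [MeasurableSpace Ω] {ℙ : Measure Ω} {l n : ℕ} {ξ : Ω → Xi l n}
  {x : Fin n → ℝ}

lemma setIntegral_preimage_comp_eq_smul_condMean [IsFiniteMeasure ℙ] {F : Type*}
    [NormedAddCommGroup F] [NormedSpace ℝ F] [CompleteSpace F] (hξ : Integrable ξ ℙ)
    (L : Xi l n →ₗ[ℝ] F) (P : Set (Xi l n)) :
    ∫ ω in ξ ⁻¹' P, L (ξ ω) ∂ℙ = (ℙ (ξ ⁻¹' P)).toReal • L (condMean ℙ ξ P) := by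
  rw [condMean, map_smul, smul_smul]
  rcases eq_or_ne (ℙ (ξ ⁻¹' P)) 0 with h0 | hpos
  · simp [Measure.restrict_eq_zero.mpr h0, h0]
  · rw [mul_inv_cancel₀ (ENNReal.toReal_ne_zero.mpr ⟨hpos, measure_ne_top _ _⟩), one_smul]
    exact (LinearMap.toContinuousLinearMap L).integral_comp_comm hξ.restrict

lemma setIntegral_dotProduct_costResidual [IsFiniteMeasure ℙ] (hξ : Integrable ξ ℙ)
    (lam : Fin l → ℝ) (P : Set (Xi l n)) :
    ∫ ω in ξ ⁻¹' P, costResidual x (ξ ω) ⬝ᵥ lam ∂ℙ =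
      (ℙ (ξ ⁻¹' P)).toReal * (costResidual x (condMean ℙ ξ P) ⬝ᵥ lam) := by
  simpa using setIntegral_preimage_comp_eq_smul_condMean hξ
    ((dotProductBilin ℝ ℝ).flip lam ∘ₗ costResidual x) P

lemma integrable_dotProduct_costResidual (hξ : Integrable ξ ℙ) (lam : Fin l → ℝ) :
    Integrable (fun ω => costResidual x (ξ ω) ⬝ᵥ lam) ℙ :=
  (LinearMap.toContinuousLinearMap
    ((dotProductBilin ℝ ℝ).flip lam ∘ₗ costResidual (l := l) x)).integrable_comp hξ

variable {m : ℕ} {W : Fin l → Fin m → ℝ} {q : Fin m → ℝ} {P : Set (Xi l n)}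

lemma ae_coe_dotProduct_eq_Qfun_of_setIntegral_eq (hD : (polyD W q).Nonempty)
    (hξ : Integrable ξ ℙ) (hQ : ∀ᵐ ω ∂ℙ, Qfun W q x (ξ ω) ≠ ⊤)
    (hQint : Integrable (fun ω => (Qfun W q x (ξ ω)).toReal) ℙ)
    (hP : MeasurableSet (ξ ⁻¹' P)) {lam : Fin l → ℝ} (hlam : lam ∈ polyD W q)
    (heq : ∫ ω in ξ ⁻¹' P, costResidual x (ξ ω) ⬝ᵥ lam ∂ℙ =
      ∫ ω in ξ ⁻¹' P, (Qfun W q x (ξ ω)).toReal ∂ℙ) :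
    ∀ᵐ ω ∂ℙ, ξ ω ∈ P → ((costResidual x (ξ ω) ⬝ᵥ lam : ℝ) : EReal) = Qfun W q x (ξ ω) := by
  have hle : ∀ᵐ ω ∂ℙ, costResidual x (ξ ω) ⬝ᵥ lam ≤ (Qfun W q x (ξ ω)).toReal := by
    filter_upwards [hQ] with ω hω
    exact dotProduct_le_toReal_Qfun hlam hω
  have hae := (integral_eq_iff_of_ae_le (integrable_dotProduct_costResidual hξ lam).integrableOn
    hQint.integrableOn (ae_restrict_of_ae hle)).mp heq
  filter_upwards [(ae_restrict_iff' hP).mp hae, hQ] with ω hω hfin hmem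
  rw [hω hmem, EReal.coe_toReal hfin (Qfun_ne_bot hD x _)]

end Cells

section Adapted

variable {Ω : Type*} [MeasurableSpace Ω] {ℙ : Measure Ω} [IsFiniteMeasure ℙ] {l n m : ℕ}
  {W : Fin l → Fin m → ℝ} {q : Fin m → ℝ} {ξ : Ω → Xi l n} {x : Fin n → ℝ}
  {P : Set (Xi l n)}

lemma Qfun_condMean_le (hξ : Integrable ξ ℙ) (hQ : ∀ᵐ ω ∂ℙ, Qfun W q x (ξ ω) ≠ ⊤)
    (hQint : Integrable (fun ω => (Qfun W q x (ξ ω)).toReal) ℙ) (hpos : 0 < ℙ (ξ ⁻¹' P)) :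
    Qfun W q x (condMean ℙ ξ P) ≤
      (((ℙ (ξ ⁻¹' P)).toReal⁻¹ * ∫ ω in ξ ⁻¹' P, (Qfun W q x (ξ ω)).toReal ∂ℙ : ℝ) : EReal) := by
  refine Qfun_le_coe_iff.mpr fun lam hlam => ?_
  rw [le_inv_mul_iff₀ (ENNReal.toReal_pos hpos.ne' (measure_ne_top _ _)),
    ← setIntegral_dotProduct_costResidual hξ]
  refine integral_mono_ae (integrable_dotProduct_costResidual hξ lam).integrableOn
    hQint.integrableOn (ae_restrict_of_ae ?_)
  filter_upwards [hQ] with ω hω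
  exact dotProduct_le_toReal_Qfun hlam hω

lemma measure_mul_toReal_Qfun_condMean_le (hD : (polyD W q).Nonempty) (hξ : Integrable ξ ℙ)
    (hQ : ∀ᵐ ω ∂ℙ, Qfun W q x (ξ ω) ≠ ⊤)
    (hQint : Integrable (fun ω => (Qfun W q x (ξ ω)).toReal) ℙ) :
    (ℙ (ξ ⁻¹' P)).toReal * (Qfun W q x (condMean ℙ ξ P)).toReal ≤
      ∫ ω in ξ ⁻¹' P, (Qfun W q x (ξ ω)).toReal ∂ℙ := by
  rcases eq_zero_or_pos (ℙ (ξ ⁻¹' P)) with h0 | hpos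
  · simp [h0, Measure.restrict_eq_zero.mpr h0]
  · have := EReal.toReal_le_toReal (Qfun_condMean_le hξ hQ hQint hpos) (Qfun_ne_bot hD x _)
      (EReal.coe_ne_top _)
    rwa [EReal.toReal_coe, le_inv_mul_iff₀ (ENNReal.toReal_pos hpos.ne' (measure_ne_top _ _))]
      at this

lemma Vpart_eq_coe_sum (hD : (polyD W q).Nonempty) (hξ : Integrable ξ ℙ)
    (hQ : ∀ᵐ ω ∂ℙ, Qfun W q x (ξ ω) ≠ ⊤)
    (hQint : Integrable (fun ω => (Qfun W q x (ξ ω)).toReal) ℙ) (Ps : Finset (Set (Xi l n))) :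
    Vpart W q ℙ ξ Ps x =
      ((∑ P ∈ Ps, (ℙ (ξ ⁻¹' P)).toReal * (Qfun W q x (condMean ℙ ξ P)).toReal : ℝ) : EReal) := by
  rw [Vpart, EReal.coe_finset_sum]
  refine Finset.sum_congr rfl fun P _ => ?_
  split_ifs with hpos
  · rw [EReal.coe_mul, EReal.coe_toReal (ne_top_of_le_ne_top (EReal.coe_ne_top _)
      (Qfun_condMean_le hξ hQ hQint hpos)) (Qfun_ne_bot hD x _)]
  · simp [nonpos_iff_eq_zero.mp (not_lt.mp hpos)]

lemma measure_mul_toReal_Qfun_condMean_eq_of_adapted (hD : (polyD W q).Nonempty)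
    (hξmeas : Measurable ξ) (hξ : Integrable ξ ℙ) (hQ : ∀ᵐ ω ∂ℙ, Qfun W q x (ξ ω) ≠ ⊤)
    (hQint : Integrable (fun ω => (Qfun W q x (ξ ω)).toReal) ℙ)
    {Ps : Finset (Set (Xi l n))} (hPs : IsFinPartition Ps)
    (hadapt : Vpart W q ℙ ξ Ps x = Vtrue W q ℙ ξ x) (hP : P ∈ Ps) :
    (ℙ (ξ ⁻¹' P)).toReal * (Qfun W q x (condMean ℙ ξ P)).toReal =
      ∫ ω in ξ ⁻¹' P, (Qfun W q x (ξ ω)).toReal ∂ℙ := by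
  rw [Vpart_eq_coe_sum hD hξ hQ hQint, Vtrue, if_pos ⟨hQ, hQint⟩,
    ← hPs.sum_setIntegral_preimage hξmeas hQint, EReal.coe_eq_coe_iff] at hadapt
  exact (Finset.sum_eq_sum_iff_of_le fun P _ =>
    measure_mul_toReal_Qfun_condMean_le hD hξ hQ hQint).mp hadapt P hP

end Adapted

theorem cellwise_optimal_dual_of_adapted_partition_general
    {Ω : Type*} [MeasurableSpace Ω] {l n m : ℕ}
    (W : Fin l → Fin m → ℝ) (q : Fin m → ℝ) (hD : (polyD W q).Nonempty)
    (ℙ : Measure Ω) [IsProbabilityMeasure ℙ]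
    (ξ : Ω → Xi l n) (hξmeas : Measurable ξ) (hξint : Integrable ξ ℙ)
    (x : Fin n → ℝ)
    (hQint : (∀ᵐ ω ∂ℙ, Qfun W q x (ξ ω) ≠ ⊤) ∧
      Integrable (fun ω => (Qfun W q x (ξ ω)).toReal) ℙ)
    (Ps : Finset (Set (Xi l n))) (hPs : IsFinPartition Ps)
    (hadapt : Vpart W q ℙ ξ Ps x = Vtrue W q ℙ ξ x) :
    ∀ P ∈ Ps, 0 < ℙ (ξ ⁻¹' P) →
      ∃ lamP ∈ polyD W q, ∀ᵐ ω ∂ℙ, ξ ω ∈ P →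
        ((∑ i, ((ξ ω).2 i - ∑ j, (ξ ω).1 i j * x j) * lamP i : ℝ) : EReal)
          = Qfun W q x (ξ ω) := by
  obtain ⟨hQ, hQint⟩ := hQint
  intro P hP hpos
  have hfin : Qfun W q x (condMean ℙ ξ P) ≠ ⊤ :=
    ne_top_of_le_ne_top (EReal.coe_ne_top _) (Qfun_condMean_le hξint hQ hQint hpos)
  obtain ⟨lam, hlam, hQeq⟩ := exists_Qfun_eq_coe_dotProduct hD hfin
  refine ⟨lam, hlam, ae_coe_dotProduct_eq_Qfun_of_setIntegral_eq hD hξint hQ hQint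
    (hξmeas (hPs.1 P hP)) hlam ?_⟩
  rw [setIntegral_dotProduct_costResidual hξint,
    ← measure_mul_toReal_Qfun_condMean_eq_of_adapted hD hξmeas hξint hQ hQint hPs hadapt hP,
    hQeq, EReal.toReal_coe]

/-- Theorem 3, necessity: if the partition `Ps` is adapted to `x`,
i.e. `V_Ps(x) = V(x)`, then on every positive-probability cell `P ∈ Ps` some `λ_P ∈ D`
attains the supremum `Q(x, ξ(ω))` a.e. -/
theorem cellwise_optimal_dual_of_adapted_partition
    {Ω : Type*} [MeasurableSpace Ω] {l n m : ℕ}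
    (hl : 0 < l) (hn : 0 < n) (hm : 0 < m)
    (W : Fin l → Fin m → ℝ) (q : Fin m → ℝ) (hD : (polyD W q).Nonempty)
    (ℙ : Measure Ω) [IsProbabilityMeasure ℙ]
    (ξ : Ω → Xi l n) (hξmeas : Measurable ξ) (hξint : Integrable ξ ℙ)
    (x : Fin n → ℝ)
    (hQint : (∀ᵐ ω ∂ℙ, Qfun W q x (ξ ω) ≠ ⊤) ∧
      Integrable (fun ω => (Qfun W q x (ξ ω)).toReal) ℙ)
    (Ps : Finset (Set (Xi l n))) (hPs : IsFinPartition Ps)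
    (hadapt : Vpart W q ℙ ξ Ps x = Vtrue W q ℙ ξ x) :
    ∀ P ∈ Ps, 0 < ℙ (ξ ⁻¹' P) →
      ∃ lamP ∈ polyD W q, ∀ᵐ ω ∂ℙ, ξ ω ∈ P →
        ((∑ i, ((ξ ω).2 i - ∑ j, (ξ ω).1 i j * x j) * lamP i : ℝ) : EReal)
          = Qfun W q x (ξ ω) :=
  cellwise_optimal_dual_of_adapted_partition_general W q hD ℙ ξ hξmeas hξint x hQint Ps hPs hadapt

end
end
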